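/- arXiv:2106.09363 — 2 statements merged into one kernel-verified Lean document; each statement's English description precedes it below -/
import Mathlib

section
/- Let x_1, …, x_n and x̃_1, …, x̃_n be points in ℝ^d with [x̃_1 … x̃_n] of full rank d, let π* be a permutation of {1,…,n} and R* a d×d orthogonal matrix with sqrt(Σ_{i=1}^n ‖x_i − R* x̃_{π*(i)}‖_2²) ≤ ε. Let j_1, …, j_d be d indices maximizing the absolute value of the determinant of [x̃_{j_1} … x̃_{j_d}], define i_1,…,i_d by π*(i_k) = j_k, and let R be a d×d orthogonal matrix minimizing Σ_{k=1}^d ‖x_{i_k} − R x̃_{j_k}‖_2² over all orthogonal matrices. Then for every k ∉ {i_1,…,i_d}, ‖x_k − R x̃_{π*(k)}‖_2 ≤ √(1 + 4d) · ε. -/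
/-!
Because `j` maximises `|det|` and the `x̃`'s span `ℝ^d`, Cramer's rule writes `x̃_{π*(k)}`
as `∑ₐ cₐ x̃_{jₐ}` with every `|cₐ| ≤ 1`. Hence `x_k - R x̃_{π*(k)}` differs from
`x_k - R* x̃_{π*(k)}` by `∑ₐ cₐ (R* - R) x̃_{jₐ}`, and `‖(R* - R) x̃_{jₐ}‖` is at most the sum
of the residuals of `R*` and of `R` at the anchor pair `(iₐ, jₐ)`. By Cauchy–Schwarz and the
optimality of `R` on the anchors, each residual sum is at most `√d · S`, where `S²` is the
anchor error of `R*`. So the error at `k` is at most `A + 2√d · S` with `A² + S² ≤ ε²` (`k` and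
the anchors are distinct terms of the error of `R*`), and Cauchy–Schwarz in `ℝ²` bounds this
by `√(1 + 4d) · ε`.
-/

open scoped BigOperators Matrix

/-- Euclidean norm on `ℝ^d`. -/
noncomputable def vnorm {d : ℕ} (v : Fin d → ℝ) : ℝ :=
  Real.sqrt (∑ a, (v a) ^ 2)

/-- The matrix with columns `y (j 0), …, y (j (d-1))`. -/
noncomputable def colMatrix {n d : ℕ} (y : Fin n → Fin d → ℝ) (j : Fin d → Fin n) :
    Matrix (Fin d) (Fin d) ℝ :=
  Matrix.of fun a b => y (j b) a

open Finset

lemma sum_le_sqrt_card_mul_sqrt_sum_sq {ι : Type*} [Fintype ι] (f : ι → ℝ) :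
    ∑ i, f i ≤ √(Fintype.card ι) * √(∑ i, f i ^ 2) := by
  simpa using Real.sum_mul_le_sqrt_mul_sqrt univ (fun _ ↦ 1) f

lemma add_mul_le_sqrt_one_add_sq_mul {A S b ε : ℝ} (hε : 0 ≤ ε)
    (h : A ^ 2 + S ^ 2 ≤ ε ^ 2) : A + b * S ≤ √(1 + b ^ 2) * ε := by
  rw [← Real.sqrt_sq hε, ← Real.sqrt_mul (by positivity)]
  apply Real.le_sqrt_of_sq_le
  nlinarith [sq_nonneg (b * A - S), sq_nonneg b]

lemma add_sum_comp_le_sum {ι κ : Type*} [Fintype ι] [Fintype κ] {f : κ → ℝ}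
    (hf : ∀ m, 0 ≤ f m) {i : ι → κ} (hi : Function.Injective i) {k : κ} (hk : ∀ a, k ≠ i a) :
    f k + ∑ a, f (i a) ≤ ∑ m, f m := by
  classical
  have hk' : k ∉ univ.map ⟨i, hi⟩ := by simpa [eq_comm] using hk
  calc f k + ∑ a, f (i a) = ∑ m ∈ cons k (univ.map ⟨i, hi⟩) hk', f m := by
        rw [sum_cons, sum_map]; rfl
    _ ≤ ∑ m, f m := sum_le_univ_sum_of_nonneg hf

lemma norm_sub_map_sum_smul_le {ι V E : Type*} [Fintype ι] [AddCommGroup V] [Module ℝ V]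
    [SeminormedAddCommGroup E] [NormedSpace ℝ E] (P Q : V →ₗ[ℝ] E) {c : ι → ℝ}
    (hc : ∀ a, |c a| ≤ 1) (u : ι → V) (y : ι → E) (z : E) :
    ‖z - Q (∑ a, c a • u a)‖ ≤
      ‖z - P (∑ a, c a • u a)‖ + ∑ a, (‖y a - P (u a)‖ + ‖y a - Q (u a)‖) := by
  have hdecomp : z - Q (∑ a, c a • u a) =
      (z - P (∑ a, c a • u a)) + ∑ a, c a • ((y a - Q (u a)) - (y a - P (u a))) := by
    simp only [map_sum, map_smul, sub_sub_sub_cancel_left, smul_sub, sum_sub_distrib]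
    abel
  rw [hdecomp]
  refine (norm_add_le _ _).trans (add_le_add_right ((norm_sum_le _ _).trans ?_) _)
  refine sum_le_sum fun a _ ↦ ?_
  rw [norm_smul, Real.norm_eq_abs]
  calc |c a| * ‖(y a - Q (u a)) - (y a - P (u a))‖
      ≤ 1 * ‖(y a - Q (u a)) - (y a - P (u a))‖ := by gcongr; exact hc a
    _ ≤ ‖y a - P (u a)‖ + ‖y a - Q (u a)‖ := by
        rw [one_mul, add_comm]; exact norm_sub_le _ _

lemma vnorm_eq_norm_toLp {d : ℕ} (v : Fin d → ℝ) : vnorm v = ‖WithLp.toLp 2 v‖ := by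
  simp [vnorm, EuclideanSpace.norm_eq]

lemma vnorm_sub_mulVec_sum_smul_le {ι : Type*} [Fintype ι] {d : ℕ}
    (P Q : Matrix (Fin d) (Fin d) ℝ) {c : ι → ℝ} (hc : ∀ a, |c a| ≤ 1) (u y : ι → Fin d → ℝ)
    (z : Fin d → ℝ) :
    vnorm (z - Q *ᵥ ∑ a, c a • u a) ≤
      vnorm (z - P *ᵥ ∑ a, c a • u a) +
        ∑ a, (vnorm (y a - P *ᵥ u a) + vnorm (y a - Q *ᵥ u a)) := by
  let toL2 := (WithLp.linearEquiv 2 ℝ (Fin d → ℝ)).symm.toLinearMap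
  simp only [vnorm_eq_norm_toLp, WithLp.toLp_sub]
  exact norm_sub_map_sum_smul_le (toL2 ∘ₗ P.mulVecLin) (toL2 ∘ₗ Q.mulVecLin) hc u
    (fun a ↦ WithLp.toLp 2 (y a)) (WithLp.toLp 2 z)

lemma exists_colMatrix_det_ne_zero {n d : ℕ} (y : Fin n → Fin d → ℝ)
    (hrank : (Matrix.of fun (a : Fin d) (b : Fin n) => y b a).rank = d) :
    ∃ j : Fin d → Fin n, (colMatrix y j).det ≠ 0 := by
  rw [Matrix.rank_eq_finrank_span_cols] at hrank
  obtain ⟨f, hf, -, hli⟩ := Submodule.exists_fun_fin_finrank_span_eq ℝ (Set.range y)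
  choose j hj using fun a : Fin d ↦ hf (Fin.cast hrank.symm a)
  refine ⟨j, ((Matrix.isUnit_iff_isUnit_det _).mp ?_).ne_zero⟩
  rw [← Matrix.linearIndependent_cols_iff_isUnit]
  have hcol : (colMatrix y j).col = f ∘ finCongr hrank.symm := funext hj
  rw [hcol]
  exact hli.comp _ (finCongr hrank.symm).injective

lemma colMatrix_det_ne_zero_of_forall_abs_det_le {n d : ℕ} (y : Fin n → Fin d → ℝ)
    (hrank : (Matrix.of fun (a : Fin d) (b : Fin n) => y b a).rank = d) {j : Fin d → Fin n}
    (hj : ∀ j' : Fin d → Fin n, |(colMatrix y j').det| ≤ |(colMatrix y j).det|) :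
    (colMatrix y j).det ≠ 0 := by
  obtain ⟨j₀, hj₀⟩ := exists_colMatrix_det_ne_zero y hrank
  exact fun h ↦ hj₀ (abs_nonpos_iff.mp (by simpa [h] using hj j₀))

lemma injective_of_colMatrix_det_ne_zero {n d : ℕ} {y : Fin n → Fin d → ℝ}
    {j : Fin d → Fin n} (hdet : (colMatrix y j).det ≠ 0) : Function.Injective j := by
  intro a b hab
  by_contra hne
  exact hdet (Matrix.det_zero_of_column_eq hne fun r ↦ by simp [colMatrix, hab])

lemma colMatrix_update {n d : ℕ} (y : Fin n → Fin d → ℝ) (j : Fin d → Fin n) (a : Fin d)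
    (m : Fin n) : colMatrix y (Function.update j a m) = (colMatrix y j).updateCol a (y m) := by
  ext r b
  by_cases hb : b = a
  · subst hb; simp [colMatrix]
  · simp [colMatrix, hb]

lemma colMatrix_mulVec {n d : ℕ} (y : Fin n → Fin d → ℝ) (j : Fin d → Fin n)
    (c : Fin d → ℝ) : colMatrix y j *ᵥ c = ∑ a, c a • y (j a) := by
  ext r
  simp [Matrix.mulVec, dotProduct, colMatrix, mul_comm]

lemma exists_eq_sum_smul_abs_le_one {n d : ℕ} (y : Fin n → Fin d → ℝ) {j : Fin d → Fin n}
    (hj : ∀ j' : Fin d → Fin n, |(colMatrix y j').det| ≤ |(colMatrix y j).det|)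
    (hdet : (colMatrix y j).det ≠ 0) (m : Fin n) :
    ∃ c : Fin d → ℝ, (∀ a, |c a| ≤ 1) ∧ y m = ∑ a, c a • y (j a) := by
  set M := colMatrix y j
  refine ⟨(M.det)⁻¹ • M.cramer (y m), fun a ↦ ?_, ?_⟩
  · rw [Pi.smul_apply, smul_eq_mul, abs_mul, abs_inv, inv_mul_le_one₀ (abs_pos.mpr hdet),
      Matrix.cramer_apply, ← colMatrix_update]
    exact hj _
  · rw [← colMatrix_mulVec, Matrix.mulVec_smul, Matrix.mulVec_cramer, smul_smul,
      inv_mul_cancel₀ hdet, one_smul]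

theorem stmt3_general {n d : ℕ} (x xt : Fin n → Fin d → ℝ) (ε : ℝ)
    (hrank : (Matrix.of fun (a : Fin d) (b : Fin n) => xt b a).rank = d)
    (σs : Equiv.Perm (Fin n)) (Rs : Matrix (Fin d) (Fin d) ℝ) (hRs : Rsᵀ * Rs = 1)
    (hopt : Real.sqrt (∑ i, (vnorm (x i - Rs.mulVec (xt (σs i)))) ^ 2) ≤ ε)
    (j : Fin d → Fin n)
    (hj : ∀ j' : Fin d → Fin n, |(colMatrix xt j').det| ≤ |(colMatrix xt j).det|)
    (i : Fin d → Fin n) (hi : ∀ k : Fin d, σs (i k) = j k)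
    (R : Matrix (Fin d) (Fin d) ℝ)
    (hRmin : ∀ R' : Matrix (Fin d) (Fin d) ℝ, R'ᵀ * R' = 1 →
      ∑ k : Fin d, (vnorm (x (i k) - R.mulVec (xt (j k)))) ^ 2 ≤
        ∑ k : Fin d, (vnorm (x (i k) - R'.mulVec (xt (j k)))) ^ 2) :
    ∀ k : Fin n, (∀ a : Fin d, k ≠ i a) →
      vnorm (x k - R.mulVec (xt (σs k))) ≤ Real.sqrt (1 + 4 * d) * ε := by
  intro k hk
  have hε : 0 ≤ ε := (Real.sqrt_nonneg _).trans hopt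
  have hdet : (colMatrix xt j).det ≠ 0 := colMatrix_det_ne_zero_of_forall_abs_det_le xt hrank hj
  set e := fun a ↦ vnorm (x (i a) - Rs *ᵥ xt (j a))
  have hsplit : vnorm (x k - Rs *ᵥ xt (σs k)) ^ 2 + (√(∑ a, e a ^ 2)) ^ 2 ≤ ε ^ 2 := by
    rw [Real.sq_sqrt (by positivity)]
    refine le_trans ?_ ((Real.sqrt_le_left hε).mp hopt)
    have hinj : Function.Injective i := fun a b hab ↦
      injective_of_colMatrix_det_ne_zero hdet (by rw [← hi, ← hi, hab])
    simpa only [e, hi] using add_sum_comp_le_sum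
      (f := fun m ↦ vnorm (x m - Rs *ᵥ xt (σs m)) ^ 2) (fun _ ↦ sq_nonneg _) hinj hk
  have he : ∑ a, e a ≤ √d * √(∑ a, e a ^ 2) := by
    simpa using sum_le_sqrt_card_mul_sqrt_sum_sq e
  have hf : ∑ a, vnorm (x (i a) - R *ᵥ xt (j a)) ≤ √d * √(∑ a, e a ^ 2) := by
    refine (sum_le_sqrt_card_mul_sqrt_sum_sq _).trans ?_
    rw [Fintype.card_fin]
    exact mul_le_mul_of_nonneg_left (Real.sqrt_le_sqrt (hRmin Rs hRs)) (Real.sqrt_nonneg _)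
  obtain ⟨c, hc, hv⟩ := exists_eq_sum_smul_abs_le_one xt hj hdet (σs k)
  calc vnorm (x k - R *ᵥ xt (σs k))
      ≤ vnorm (x k - Rs *ᵥ xt (σs k)) + ∑ a, (e a + vnorm (x (i a) - R *ᵥ xt (j a))) := by
        rw [hv]
        exact vnorm_sub_mulVec_sum_smul_le Rs R hc (fun a ↦ xt (j a)) (fun a ↦ x (i a)) _
    _ ≤ vnorm (x k - Rs *ᵥ xt (σs k)) + 2 * √d * √(∑ a, e a ^ 2) := by
        rw [sum_add_distrib]; linarith
    _ ≤ √(1 + (2 * √d) ^ 2) * ε := add_mul_le_sqrt_one_add_sq_mul hε hsplit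
    _ = √(1 + 4 * d) * ε := by rw [mul_pow, Real.sq_sqrt d.cast_nonneg]; norm_num

theorem stmt3 {n d : ℕ} (x xt : Fin n → Fin d → ℝ) (ε : ℝ)
    (hrank : (Matrix.of fun (a : Fin d) (b : Fin n) => xt b a).rank = d)
    (σs : Equiv.Perm (Fin n)) (Rs : Matrix (Fin d) (Fin d) ℝ) (hRs : Rsᵀ * Rs = 1)
    (hopt : Real.sqrt (∑ i, (vnorm (x i - Rs.mulVec (xt (σs i)))) ^ 2) ≤ ε)
    (j : Fin d → Fin n)
    (hj : ∀ j' : Fin d → Fin n, |(colMatrix xt j').det| ≤ |(colMatrix xt j).det|)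
    (i : Fin d → Fin n) (hi : ∀ k : Fin d, σs (i k) = j k)
    (R : Matrix (Fin d) (Fin d) ℝ) (hR : Rᵀ * R = 1)
    (hRmin : ∀ R' : Matrix (Fin d) (Fin d) ℝ, R'ᵀ * R' = 1 →
      ∑ k : Fin d, (vnorm (x (i k) - R.mulVec (xt (j k)))) ^ 2 ≤
        ∑ k : Fin d, (vnorm (x (i k) - R'.mulVec (xt (j k)))) ^ 2) :
    ∀ k : Fin n, (∀ a : Fin d, k ≠ i a) →
      vnorm (x k - R.mulVec (xt (σs k))) ≤ Real.sqrt (1 + 4 * d) * ε :=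
  stmt3_general x xt ε hrank σs Rs hRs hopt j hj i hi R hRmin
end

section
/- Let A be a nonsingular d×d real matrix (d ≥ 2) with ‖A − A(d) A(d)⁺ A‖_F ≤ √d · σ_d(A), where A(d) is A with its d-th column removed. Let U be a d×d orthogonal matrix and set δ(U) = U A(d) − A(d) and c = A_{*,d} − A(d) A(d)⁺ A_{*,d}. Then at least one of the following holds: ‖U c − c‖_2 ≤ √(2d) · ‖δ(U)‖_F, or ‖U c + c‖_2 ≤ √(2d) · ‖δ(U)‖_F. -/
/-!
Write `B = A(d)`, `Q = B B⁺` (the orthogonal projection onto the range of `B`) and `a = A_{*,d}`,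
so `c = a - Q a`. The residual `A - Q A` has `c` as its only nonzero column, so the hypothesis
reads `‖c‖ ≤ √d σ_d(A)`; and since `A` is nonsingular, `c` spans the orthogonal complement of
the range of `B`. Hence `u = U c` splits as `u = Q u + s c`, and `‖u‖ = ‖c‖` forces
`‖u - c‖² ≤ 2‖Q u‖²` or `‖u + c‖² ≤ 2‖Q u‖²`, according to the sign of `s`.

Write `Q u = B y` with `y = B⁺ u`. As `U c ⟂ U B y`, we get `‖Q u‖² = -⟪u, δ(U) y⟫`, which
Cauchy–Schwarz bounds by `‖c‖ ‖δ(U)‖_F ‖y‖`; with `σ_d(A) ‖y‖ ≤ ‖B y‖ = ‖Q u‖` this yields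
`‖Q u‖² ≤ d ‖δ(U)‖_F²`.
-/

open scoped BigOperators Matrix

/-- Frobenius norm of a real matrix. -/
noncomputable def frob {m n : Type*} [Fintype m] [Fintype n] (M : Matrix m n ℝ) : ℝ :=
  Real.sqrt (∑ i, ∑ j, (M i j) ^ 2)

/-- `A` with its `k`-th column removed; the remaining columns are indexed by `{j // j ≠ k}`. -/
def colDel {d : ℕ} (A : Matrix (Fin d) (Fin d) ℝ) (k : Fin d) :
    Matrix (Fin d) {j : Fin d // j ≠ k} ℝ :=
  Matrix.of fun i j => A i j.1

/-- `P` is the Moore–Penrose pseudo-inverse of `M` (the four Penrose conditions). -/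
def IsMPInv {m n : Type*} [Fintype m] [Fintype n]
    (M : Matrix m n ℝ) (P : Matrix n m ℝ) : Prop :=
  M * P * M = M ∧ P * M * P = P ∧ (M * P)ᵀ = M * P ∧ (P * M)ᵀ = P * M

/-- The smallest singular value of a square matrix, as the infimum of `‖A v‖` over
unit vectors `v`. -/
noncomputable def sigmaMin {d : ℕ} (A : Matrix (Fin d) (Fin d) ℝ) : ℝ :=
  sInf {r : ℝ | ∃ v : Fin d → ℝ, vnorm v = 1 ∧ r = vnorm (A.mulVec v)}

open Matrix

section DotProduct

variable {m n : Type*} [Fintype m] [Fintype n]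

lemma dotProduct_self_eq_sum_sq (v : n → ℝ) : v ⬝ᵥ v = ∑ i, v i ^ 2 := by
  simp only [dotProduct, sq]

lemma dotProduct_self_nonneg (v : n → ℝ) : 0 ≤ v ⬝ᵥ v := by
  rw [dotProduct_self_eq_sum_sq]
  positivity

lemma dotProduct_sq_le_dotProduct_self_mul (v w : n → ℝ) :
    (v ⬝ᵥ w) ^ 2 ≤ (v ⬝ᵥ v) * (w ⬝ᵥ w) := by
  rw [dotProduct_self_eq_sum_sq, dotProduct_self_eq_sum_sq]
  exact Finset.sum_mul_sq_le_sq_mul_sq Finset.univ v w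

lemma frob_sq (M : Matrix m n ℝ) : frob M ^ 2 = ∑ i, ∑ j, M i j ^ 2 :=
  Real.sq_sqrt (by positivity)

lemma frob_nonneg (M : Matrix m n ℝ) : 0 ≤ frob M := Real.sqrt_nonneg _

lemma mulVec_dotProduct_self_le (M : Matrix m n ℝ) (x : n → ℝ) :
    (M *ᵥ x) ⬝ᵥ (M *ᵥ x) ≤ frob M ^ 2 * (x ⬝ᵥ x) := by
  rw [frob_sq, Finset.sum_mul, dotProduct_self_eq_sum_sq]
  gcongr with i
  have := dotProduct_sq_le_dotProduct_self_mul (M i) x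
  rwa [dotProduct_self_eq_sum_sq (M i)] at this

lemma mulVec_dotProduct_of_transpose_mulVec_eq_zero {B : Matrix m n ℝ} {c : m → ℝ}
    (hc : Bᵀ *ᵥ c = 0) (y : n → ℝ) : (B *ᵥ y) ⬝ᵥ c = 0 := by
  rw [dotProduct_comm, dotProduct_mulVec, ← mulVec_transpose, hc, zero_dotProduct]

lemma mulVec_dotProduct_mulVec_of_transpose_mul_self [DecidableEq m] {U : Matrix m m ℝ}
    (hU : Uᵀ * U = 1) (x y : m → ℝ) : (U *ᵥ x) ⬝ᵥ (U *ᵥ y) = x ⬝ᵥ y := by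
  rw [dotProduct_mulVec, ← vecMul_transpose, vecMul_vecMul, hU, vecMul_one]

end DotProduct

section Vnorm

variable {d : ℕ}

lemma vnorm_eq_sqrt_dotProduct (v : Fin d → ℝ) : vnorm v = Real.sqrt (v ⬝ᵥ v) := by
  rw [vnorm, dotProduct_self_eq_sum_sq]

lemma vnorm_nonneg (v : Fin d → ℝ) : 0 ≤ vnorm v := Real.sqrt_nonneg _

lemma vnorm_sq (v : Fin d → ℝ) : vnorm v ^ 2 = v ⬝ᵥ v := by
  rw [vnorm_eq_sqrt_dotProduct, Real.sq_sqrt (by rw [dotProduct_self_eq_sum_sq]; positivity)]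

lemma vnorm_smul (t : ℝ) (v : Fin d → ℝ) : vnorm (t • v) = |t| * vnorm v := by
  rw [vnorm_eq_sqrt_dotProduct, vnorm_eq_sqrt_dotProduct, dotProduct_smul, smul_dotProduct,
    smul_eq_mul, smul_eq_mul, ← mul_assoc, Real.sqrt_mul (mul_self_nonneg t),
    Real.sqrt_mul_self_eq_abs]

lemma vnorm_le_of_dotProduct_self_le {v : Fin d → ℝ} {r : ℝ} (hr : 0 ≤ r) (h : v ⬝ᵥ v ≤ r ^ 2) :
    vnorm v ≤ r := by
  rw [vnorm_eq_sqrt_dotProduct]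
  exact Real.sqrt_le_iff.mpr ⟨hr, h⟩

end Vnorm

lemma IsMPInv.transpose_mul_mul_eq {m n : Type*} [Fintype m] [Fintype n]
    {M : Matrix m n ℝ} {P : Matrix n m ℝ} (h : IsMPInv M P) : Mᵀ * (M * P) = Mᵀ :=
  calc Mᵀ * (M * P) = Mᵀ * (M * P)ᵀ := by rw [h.2.2.1]
    _ = (M * P * M)ᵀ := (transpose_mul _ _).symm
    _ = Mᵀ := by rw [h.1]

lemma exists_eq_smul_of_transpose_mulVec_eq_zero {m n : Type*} [Fintype m] [Fintype n]
    {B : Matrix m n ℝ} {a c : m → ℝ} {x₀ : n → ℝ}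
    (hspan : ∀ v, ∃ (t : ℝ) (x : n → ℝ), v = t • a + B *ᵥ x)
    (hc : a - c = B *ᵥ x₀) (hBc : Bᵀ *ᵥ c = 0) {v : m → ℝ} (hv : Bᵀ *ᵥ v = 0) :
    ∃ s : ℝ, v = s • c := by
  obtain ⟨t, x, rfl⟩ := hspan v
  have hres : t • a + B *ᵥ x - t • c = B *ᵥ (x + t • x₀) := by
    rw [mulVec_add, mulVec_smul, ← hc, smul_sub]
    abel
  have hBres : (Bᴴ * B) *ᵥ (x + t • x₀) = 0 := by
    rw [conjTranspose_eq_transpose_of_trivial, ← mulVec_mulVec, ← hres, mulVec_sub, hv,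
      mulVec_smul, hBc, smul_zero, sub_zero]
  refine ⟨t, sub_eq_zero.mp ?_⟩
  rw [hres, ← conjTranspose_mul_self_mulVec_eq_zero, hBres]

section ColDel

variable {d : ℕ} (A : Matrix (Fin d) (Fin d) ℝ) (k : Fin d)

lemma mulVec_eq_smul_add_colDel_mulVec (z : Fin d → ℝ) :
    A *ᵥ z = z k • (fun i => A i k) + colDel A k *ᵥ (fun j => z j.1) := by
  funext i
  simp only [mulVec, dotProduct, Pi.add_apply, Pi.smul_apply, smul_eq_mul, colDel, of_apply]
  rw [Fintype.sum_eq_add_sum_subtype_ne _ k]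
  ring

lemma exists_eq_smul_add_colDel_mulVec (hA : A.det ≠ 0) (v : Fin d → ℝ) :
    ∃ (t : ℝ) (x : {j // j ≠ k} → ℝ), v = t • (fun i => A i k) + colDel A k *ᵥ x := by
  refine ⟨(A⁻¹ *ᵥ v) k, fun j => (A⁻¹ *ᵥ v) j.1, ?_⟩
  rw [← mulVec_eq_smul_add_colDel_mulVec, mulVec_mulVec,
    mul_nonsing_inv A (isUnit_iff_ne_zero.mpr hA), one_mulVec]

lemma frob_sub_mul_eq_vnorm {Q : Matrix (Fin d) (Fin d) ℝ} (hQ : Q * colDel A k = colDel A k) :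
    frob (A - Q * A) = vnorm ((fun i => A i k) - Q *ᵥ fun i => A i k) := by
  have hcol : ∀ i (j : {j // j ≠ k}), (A - Q * A) i j = 0 := fun i j => by
    have := congrFun (congrFun hQ i) j
    simp only [mul_apply, colDel, of_apply] at this
    simp only [Matrix.sub_apply, mul_apply, this, sub_self]
  rw [frob, vnorm]
  congr 1
  refine Finset.sum_congr rfl fun i _ => ?_
  simp only [Fintype.sum_eq_add_sum_subtype_ne _ k, hcol, ne_eq, OfNat.ofNat_ne_zero,
    not_false_eq_true, zero_pow, Finset.sum_const_zero, add_zero]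
  simp only [Matrix.sub_apply, mul_apply, Pi.sub_apply, mulVec, dotProduct]

end ColDel

section SigmaMin

variable {d : ℕ} (A : Matrix (Fin d) (Fin d) ℝ)

lemma sigmaMin_nonneg : 0 ≤ sigmaMin A :=
  Real.sInf_nonneg fun _ ⟨_, _, hr⟩ => hr ▸ vnorm_nonneg _

lemma sigmaMin_mul_vnorm_le (v : Fin d → ℝ) : sigmaMin A * vnorm v ≤ vnorm (A *ᵥ v) := by
  rcases (vnorm_nonneg v).eq_or_lt with hv | hv
  · rw [← hv, mul_zero]
    exact vnorm_nonneg _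
  have hunit : vnorm ((vnorm v)⁻¹ • v) = 1 := by
    rw [vnorm_smul, abs_inv, abs_of_pos hv, inv_mul_cancel₀ hv.ne']
  have hσ : sigmaMin A ≤ (vnorm v)⁻¹ * vnorm (A *ᵥ v) := by
    rw [← abs_of_pos (inv_pos.mpr hv), ← vnorm_smul, ← mulVec_smul]
    exact csInf_le ⟨0, fun _ ⟨_, _, hr⟩ => hr ▸ vnorm_nonneg _⟩ ⟨_, hunit, rfl⟩
  rwa [le_inv_mul_iff₀ hv, mul_comm] at hσ

lemma sigmaMin_sq_mul_le_colDel (k : Fin d) (y : {j // j ≠ k} → ℝ) :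
    sigmaMin A ^ 2 * (y ⬝ᵥ y) ≤ (colDel A k *ᵥ y) ⬝ᵥ (colDel A k *ᵥ y) := by
  set z : Fin d → ℝ := fun j => if h : j = k then 0 else y ⟨j, h⟩
  have hzk : z k = 0 := dif_pos rfl
  have hzy : (fun j : {j // j ≠ k} => z j.1) = y := funext fun j => dif_neg j.2
  have hAz : A *ᵥ z = colDel A k *ᵥ y := by
    rw [mulVec_eq_smul_add_colDel_mulVec A k, hzk, zero_smul, zero_add, hzy]
  have hzz : z ⬝ᵥ z = y ⬝ᵥ y := by
    rw [dotProduct, Fintype.sum_eq_add_sum_subtype_ne _ k, hzk, mul_zero, zero_add]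
    exact congrArg (fun w => w ⬝ᵥ w) hzy
  rw [← hAz, ← hzz, ← vnorm_sq, ← vnorm_sq, ← mul_pow]
  exact pow_le_pow_left₀ (mul_nonneg (sigmaMin_nonneg A) (vnorm_nonneg z))
    (sigmaMin_mul_vnorm_le A z) 2

end SigmaMin

section Projection

variable {m n : Type*} [Fintype m] [Fintype n]

lemma dotProduct_self_sub_le_or_add_le {u w c : n → ℝ} {s : ℝ} (hs : u - w = s • c)
    (hwc : w ⬝ᵥ c = 0) (huc : u ⬝ᵥ u = c ⬝ᵥ c) :
    (u - c) ⬝ᵥ (u - c) ≤ 2 * (w ⬝ᵥ w) ∨ (u + c) ⬝ᵥ (u + c) ≤ 2 * (w ⬝ᵥ w) := by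
  obtain rfl : u = w + s • c := by rw [← hs, add_sub_cancel]
  have hcw : c ⬝ᵥ w = 0 := by rw [dotProduct_comm, hwc]
  simp only [add_dotProduct, dotProduct_add, sub_dotProduct, dotProduct_sub, smul_dotProduct,
    dotProduct_smul, smul_eq_mul, hwc, hcw] at huc ⊢
  have hq := dotProduct_self_nonneg w
  have hγ := dotProduct_self_nonneg c
  rcases le_total 0 s with h | h
  · left
    nlinarith [mul_nonneg h hq, mul_nonneg h hγ, mul_nonneg (mul_nonneg h h) hγ]
  · right
    nlinarith [mul_nonneg (neg_nonneg.mpr h) hq, mul_nonneg (neg_nonneg.mpr h) hγ,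
      mul_nonneg (mul_nonneg (neg_nonneg.mpr h) (neg_nonneg.mpr h)) hγ]

lemma mulVec_dotProduct_self_le_mul_frob_sq [DecidableEq m] {B : Matrix m n ℝ}
    {U : Matrix m m ℝ} (hU : Uᵀ * U = 1) {c : m → ℝ} (hBc : Bᵀ *ᵥ c = 0) {y : n → ℝ}
    (hy : Bᵀ *ᵥ (U *ᵥ c - B *ᵥ y) = 0) {σ D : ℝ} (hD : 0 ≤ D)
    (hσ : σ ^ 2 * (y ⬝ᵥ y) ≤ (B *ᵥ y) ⬝ᵥ (B *ᵥ y)) (hc : c ⬝ᵥ c ≤ D * σ ^ 2) :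
    (B *ᵥ y) ⬝ᵥ (B *ᵥ y) ≤ D * frob (U * B - B) ^ 2 := by
  set q := (B *ᵥ y) ⬝ᵥ (B *ᵥ y)
  set F := frob (U * B - B) ^ 2
  have hq : q = -((U *ᵥ c) ⬝ᵥ ((U * B - B) *ᵥ y)) := by
    have hproj : (U *ᵥ c - B *ᵥ y) ⬝ᵥ (B *ᵥ y) = 0 := by
      rw [dotProduct_comm, mulVec_dotProduct_of_transpose_mulVec_eq_zero hy]
    have hUBy : (U *ᵥ c) ⬝ᵥ ((U * B) *ᵥ y) = 0 := by
      rw [← mulVec_mulVec, mulVec_dotProduct_mulVec_of_transpose_mul_self hU, dotProduct_comm,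
        mulVec_dotProduct_of_transpose_mulVec_eq_zero hBc]
    rw [sub_dotProduct] at hproj
    rw [sub_mulVec, dotProduct_sub, hUBy]
    linarith
  have hCS : q ^ 2 ≤ (c ⬝ᵥ c) * (F * (y ⬝ᵥ y)) :=
    calc q ^ 2 = ((U *ᵥ c) ⬝ᵥ ((U * B - B) *ᵥ y)) ^ 2 := by rw [hq, neg_sq]
      _ ≤ ((U *ᵥ c) ⬝ᵥ (U *ᵥ c)) * (((U * B - B) *ᵥ y) ⬝ᵥ ((U * B - B) *ᵥ y)) :=
        dotProduct_sq_le_dotProduct_self_mul _ _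
      _ ≤ (c ⬝ᵥ c) * (F * (y ⬝ᵥ y)) := by
        rw [mulVec_dotProduct_mulVec_of_transpose_mul_self hU]
        exact mul_le_mul_of_nonneg_left (mulVec_dotProduct_self_le _ _) (dotProduct_self_nonneg c)
  have hF : 0 ≤ F := sq_nonneg _
  have hqq : q * q ≤ (D * F) * q :=
    calc q * q = q ^ 2 := (sq q).symm
      _ ≤ (c ⬝ᵥ c) * (F * (y ⬝ᵥ y)) := hCS
      _ ≤ (D * σ ^ 2) * (F * (y ⬝ᵥ y)) :=
        mul_le_mul_of_nonneg_right hc (mul_nonneg hF (dotProduct_self_nonneg y))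
      _ = (D * F) * (σ ^ 2 * (y ⬝ᵥ y)) := by ring
      _ ≤ (D * F) * q := mul_le_mul_of_nonneg_left hσ (mul_nonneg hD hF)
  have hq0 : 0 ≤ q := dotProduct_self_nonneg _
  rcases hq0.eq_or_lt with h | h
  · rw [← h]
    exact mul_nonneg hD hF
  · exact le_of_mul_le_mul_right hqq h

end Projection

theorem stmt8_general {d : ℕ} (A : Matrix (Fin d) (Fin d) ℝ) (hA : A.det ≠ 0)
    (k : Fin d)
    (P : Matrix {j : Fin d // j ≠ k} (Fin d) ℝ) (hP : IsMPInv (colDel A k) P)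
    (hbound : frob (A - colDel A k * P * A) ≤ Real.sqrt d * sigmaMin A)
    (U : Matrix (Fin d) (Fin d) ℝ) (hU : Uᵀ * U = 1)
    (c : Fin d → ℝ)
    (hc : c = (fun i => A i k) - (colDel A k * P).mulVec (fun i => A i k)) :
    vnorm (U.mulVec c - c) ≤
        Real.sqrt (2 * d) * frob (U * colDel A k - colDel A k) ∨
    vnorm (U.mulVec c + c) ≤
        Real.sqrt (2 * d) * frob (U * colDel A k - colDel A k) := by
  set B := colDel A k
  have hac : (fun i => A i k) - c = B *ᵥ (P *ᵥ fun i => A i k) := by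
    rw [hc, sub_sub_cancel, mulVec_mulVec]
  have hBc : Bᵀ *ᵥ c = 0 := by
    rw [hc, mulVec_sub, mulVec_mulVec, hP.transpose_mul_mul_eq, sub_self]
  have hcσ : c ⬝ᵥ c ≤ d * sigmaMin A ^ 2 := by
    rw [frob_sub_mul_eq_vnorm A k hP.1, ← hc] at hbound
    rw [← vnorm_sq, ← Real.sq_sqrt (Nat.cast_nonneg d), ← mul_pow]
    exact pow_le_pow_left₀ (vnorm_nonneg c) hbound 2
  set u := U *ᵥ c
  set y := P *ᵥ u
  have hy : Bᵀ *ᵥ (u - B *ᵥ y) = 0 := by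
    rw [mulVec_sub, mulVec_mulVec u B P, mulVec_mulVec u Bᵀ (B * P), hP.transpose_mul_mul_eq,
      sub_self]
  obtain ⟨s, hs⟩ := exists_eq_smul_of_transpose_mulVec_eq_zero
    (exists_eq_smul_add_colDel_mulVec A k hA) hac hBc hy
  have hq := mulVec_dotProduct_self_le_mul_frob_sq hU hBc hy (Nat.cast_nonneg d)
    (sigmaMin_sq_mul_le_colDel A k y) hcσ
  have hr : 0 ≤ Real.sqrt (2 * d) * frob (U * B - B) :=
    mul_nonneg (Real.sqrt_nonneg _) (frob_nonneg _)
  have hr2 : (Real.sqrt (2 * d) * frob (U * B - B)) ^ 2 = 2 * (d * frob (U * B - B) ^ 2) := by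
    rw [mul_pow, Real.sq_sqrt (by positivity)]
    ring
  refine (dotProduct_self_sub_le_or_add_le hs
    (mulVec_dotProduct_of_transpose_mulVec_eq_zero hBc y)
    (mulVec_dotProduct_mulVec_of_transpose_mul_self hU c c)).imp
    (fun h => vnorm_le_of_dotProduct_self_le hr ?_) (fun h => vnorm_le_of_dotProduct_self_le hr ?_)
  all_goals linarith

theorem stmt8 {d : ℕ} (hd : 2 ≤ d) (A : Matrix (Fin d) (Fin d) ℝ) (hA : A.det ≠ 0)
    (k : Fin d) (hk : (k : ℕ) = d - 1)
    (P : Matrix {j : Fin d // j ≠ k} (Fin d) ℝ) (hP : IsMPInv (colDel A k) P)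
    (hbound : frob (A - colDel A k * P * A) ≤ Real.sqrt d * sigmaMin A)
    (U : Matrix (Fin d) (Fin d) ℝ) (hU : Uᵀ * U = 1)
    (c : Fin d → ℝ)
    (hc : c = (fun i => A i k) - (colDel A k * P).mulVec (fun i => A i k)) :
    vnorm (U.mulVec c - c) ≤
        Real.sqrt (2 * d) * frob (U * colDel A k - colDel A k) ∨
    vnorm (U.mulVec c + c) ≤
        Real.sqrt (2 * d) * frob (U * colDel A k - colDel A k) :=
  stmt8_general A hA k P hP hbound U hU c hc
end
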